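/- Let F ∈ ℤ[x,y] be a polynomial of total degree 6 whose degree-6 homogeneous component satisfies F₆(x,y) = f₆·x⁶ for some non-zero integer f₆, and suppose the degree-5 homogeneous component F₅ is not divisible by x³ in ℤ[x,y]. Then F is not arithmetically positive, i.e. inf_{(x,y) ∈ ℤ²} F(x,y) = −∞. -/

import Mathlib

open MvPolynomial

private lemma aux_unbounded (p : Polynomial ℤ) (N : ℕ) (hN : 0 < N)
    (hd : ∀ n, N < n → p.coeff n = 0) (hneg : p.coeff N < 0) (M : ℤ) :
    ∃ m : ℤ, p.eval m < M := by
  set q : Polynomial ℝ := p.map (Int.castRingHom ℝ) with hq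
  have hqc : ∀ n, q.coeff n = (p.coeff n : ℝ) := fun n => Polynomial.coeff_map _ _
  have hqd : q.natDegree ≤ N := Polynomial.natDegree_le_iff_coeff_eq_zero.2 (fun n hn => by
    rw [hqc, hd n hn, Int.cast_zero])
  have hqN : q.coeff N ≠ 0 := by rw [hqc]; exact_mod_cast hneg.ne
  have hdeg : q.natDegree = N := le_antisymm hqd (Polynomial.le_natDegree_of_ne_zero hqN)
  have hq0 : q ≠ 0 := fun h => hqN (by simp [h])
  have hdegpos : 0 < q.degree := by
    rw [Polynomial.degree_eq_natDegree hq0, hdeg]; exact_mod_cast hN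
  have hlead : q.leadingCoeff ≤ 0 := by
    rw [Polynomial.leadingCoeff, hdeg, hqc]; exact_mod_cast hneg.le
  have ht : Filter.Tendsto (fun x : ℝ => Polynomial.eval x q) Filter.atTop Filter.atBot :=
    q.tendsto_atBot_of_leadingCoeff_nonpos hdegpos hlead
  have ht2 : Filter.Tendsto (fun m : ℤ => Polynomial.eval ((m : ℝ)) q) Filter.atTop Filter.atBot :=
    ht.comp tendsto_intCast_atTop_atTop
  obtain ⟨m, hm⟩ := (ht2.eventually (Filter.eventually_lt_atBot (M : ℝ))).exists
  refine ⟨m, ?_⟩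
  have h2 : ((p.eval m : ℤ) : ℝ) < (M : ℝ) := by
    rwa [hq, Polynomial.eval_intCast_map] at hm
  exact_mod_cast h2

private lemma aux_eqD (d : Fin 2 →₀ ℕ) :
    d = Finsupp.single 0 (d 0) + Finsupp.single 1 (d 1) := by
  ext i
  fin_cases i <;> simp [Finsupp.single_apply]

private lemma aux_sum0 (d : Fin 2 →₀ ℕ) : (d.sum fun _ e => e) = d 0 + d 1 := by
  rw [Finsupp.sum_fintype _ _ (fun _ => rfl)]
  exact Fin.sum_univ_two d

private lemma aux_degree (d : Fin 2 →₀ ℕ) : d.degree = d 0 + d 1 := by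
  rw [Finsupp.degree, ← aux_sum0 d, Finsupp.sum]; rfl


private lemma aux_eval (F : MvPolynomial (Fin 2) ℤ) (α ε m : ℤ) :
    Polynomial.eval m
      (aeval ![Polynomial.C α * Polynomial.X, Polynomial.C ε * Polynomial.X ^ 2] F)
      = eval ![α * m, ε * m ^ 2] F := by
  induction F using MvPolynomial.induction_on with
  | C a => simp
  | add p q hp hq => simp only [map_add, Polynomial.eval_add, hp, hq]
  | mul_X p i hp =>
      rw [map_mul, Polynomial.eval_mul, hp, aeval_X, eval_mul, eval_X]
      fin_cases i <;> simp

private lemma aux_coeff (F : MvPolynomial (Fin 2) ℤ) (α ε : ℤ) (N : ℕ) :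
    (aeval ![Polynomial.C α * Polynomial.X, Polynomial.C ε * Polynomial.X ^ 2] F).coeff N
      = ∑ d ∈ F.support, if d 0 + 2 * d 1 = N
          then F.coeff d * α ^ (d 0) * ε ^ (d 1) else 0 := by
  rw [aeval_def, eval₂_eq', Polynomial.finset_sum_coeff]
  apply Finset.sum_congr rfl
  intro d _
  rw [Fin.prod_univ_two]
  simp only [Matrix.cons_val_zero, Matrix.cons_val_one, Matrix.head_cons]
  have h1 : (algebraMap ℤ (Polynomial ℤ)) (F.coeff d) *
      ((Polynomial.C α * Polynomial.X) ^ d 0 * (Polynomial.C ε * Polynomial.X ^ 2) ^ (d 1))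
      = Polynomial.C (F.coeff d * α ^ d 0 * ε ^ d 1) * Polynomial.X ^ (d 0 + 2 * d 1) := by
    rw [mul_pow, mul_pow, ← pow_mul]
    simp only [Polynomial.algebraMap_eq, map_mul, map_pow]
    ring
  rw [h1, Polynomial.coeff_C_mul, Polynomial.coeff_X_pow]
  rcases eq_or_ne (d 0 + 2 * d 1) N with h | h
  · rw [if_pos h.symm, if_pos h, mul_one]
  · rw [if_neg (Ne.symm h), if_neg h, mul_zero]

private lemma aux_support (F : MvPolynomial (Fin 2) ℤ) (hdeg : F.totalDegree = 6) (f₆ : ℤ)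
    (h6 : homogeneousComponent 6 F = C f₆ * X 0 ^ 6)
    {d : Fin 2 →₀ ℕ} (hd : d ∈ F.support) :
    d 0 + d 1 ≤ 6 ∧ (d 0 + d 1 = 6 → d 0 = 6 ∧ d 1 = 0) := by
  have h1 : d 0 + d 1 ≤ 6 := by rw [← aux_sum0, ← hdeg]; exact le_totalDegree hd
  refine ⟨h1, fun h2 => ?_⟩
  have hhc := coeff_homogeneousComponent (n := 6) (φ := F) d
  rw [h6, aux_degree, h2, if_pos rfl, coeff_C_mul, coeff_X_pow] at hhc
  by_cases hs : Finsupp.single (0 : Fin 2) 6 = d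
  · constructor
    · rw [← hs]; simp
    · rw [← hs]; simp [Finsupp.single_apply]
  · rw [if_neg hs, mul_zero] at hhc
    exact absurd hhc.symm (mem_support_iff.mp hd)

/-- If `F ∈ ℤ[x,y]` has degree 6 with leading form `F₆ = f₆ x⁶` (`f₆ ≠ 0`) and the
degree-5 component `F₅` is not divisible by `x³`, then
`inf_{(x,y) ∈ ℤ²} F(x,y) = -∞`, i.e. `F` is not arithmetically positive. -/
theorem totally_ramified_x3_not_dividing_F5
    (F : MvPolynomial (Fin 2) ℤ) (hdeg : F.totalDegree = 6)
    (f₆ : ℤ) (hf₆ : f₆ ≠ 0)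
    (h6 : homogeneousComponent 6 F = C f₆ * X 0 ^ 6)
    (h5 : ¬ (X 0 : MvPolynomial (Fin 2) ℤ) ^ 3 ∣ homogeneousComponent 5 F) :
    ∀ M : ℤ, ∃ x y : ℤ, eval ![x, y] F < M := by
  intro M
  classical
  set c : ℕ → ℕ → ℤ := fun a b => F.coeff (Finsupp.single 0 a + Finsupp.single 1 b) with hc
  -- If all three low coefficients of F₅ vanish, then X0³ ∣ F₅.
  have hdvd : c 0 5 = 0 → c 1 4 = 0 → c 2 3 = 0 →
      (X 0 : MvPolynomial (Fin 2) ℤ) ^ 3 ∣ homogeneousComponent 5 F := by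
    intro h05 h14 h23
    rw [X_pow_eq_monomial, monomial_one_dvd_iff_modMonomial_eq_zero]
    ext d
    by_cases hle : Finsupp.single (0 : Fin 2) 3 ≤ d
    · rw [coeff_modMonomial_of_le _ hle, coeff_zero]
    · rw [coeff_modMonomial_of_not_le _ hle, coeff_zero,
        coeff_homogeneousComponent]
      have hd0 : d 0 ≤ 2 := by
        by_contra hcon
        exact hle (Finsupp.single_le_iff.mpr (by omega))
      split_ifs with hdd
      · rw [aux_degree] at hdd
        have hcase : (d 0 = 0 ∧ d 1 = 5) ∨ (d 0 = 1 ∧ d 1 = 4) ∨ (d 0 = 2 ∧ d 1 = 3) := by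
          omega
        rcases hcase with ⟨ha, hb⟩ | ⟨ha, hb⟩ | ⟨ha, hb⟩ <;>
          · rw [aux_eqD d, ha, hb]
            first | exact h05 | exact h14 | exact h23
      · rfl
  have hone : c 0 5 ≠ 0 ∨ (c 0 5 = 0 ∧ c 1 4 ≠ 0) ∨
      (c 0 5 = 0 ∧ c 1 4 = 0 ∧ c 2 3 ≠ 0) := by
    by_cases h05 : c 0 5 = 0
    · by_cases h14 : c 1 4 = 0
      · exact Or.inr (Or.inr ⟨h05, h14, fun h23 => h5 (hdvd h05 h14 h23)⟩)
      · exact Or.inr (Or.inl ⟨h05, h14⟩)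
    · exact Or.inl h05
  rcases hone with h05 | ⟨h05, h14⟩ | ⟨h05, h14, h23⟩
  -- Case 1 : c 0 5 ≠ 0.  Use x = m, y = ε m², degree 10.
  · set ε : ℤ := if c 0 5 < 0 then 1 else -1 with hε
    set P := aeval ![Polynomial.C 1 * Polynomial.X, Polynomial.C ε * Polynomial.X ^ 2] F with hP
    have hzero : ∀ n, 10 < n → P.coeff n = 0 := by
      intro n hn
      rw [hP, aux_coeff]
      apply Finset.sum_eq_zero
      intro d hd
      obtain ⟨hle, h6'⟩ := aux_support F hdeg f₆ h6 hd
      split_ifs with h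
      · exfalso
        by_cases hs : d 0 + d 1 = 6
        · obtain ⟨e0, e1⟩ := h6' hs; omega
        · omega
      · rfl
    have hNval : P.coeff 10 = c 0 5 * ε ^ 5 := by
      rw [hP, aux_coeff]
      have hpt : ∀ d ∈ F.support,
          (if d 0 + 2 * d 1 = 10 then F.coeff d * (1:ℤ) ^ (d 0) * ε ^ (d 1) else 0)
          = (if d = Finsupp.single 0 0 + Finsupp.single 1 5
              then F.coeff d * (1:ℤ) ^ (d 0) * ε ^ (d 1) else 0) := by
        intro d hd
        obtain ⟨hle, h6'⟩ := aux_support F hdeg f₆ h6 hd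
        by_cases h : d 0 + 2 * d 1 = 10
        · have hD : d 0 = 0 ∧ d 1 = 5 := by
            by_cases hs : d 0 + d 1 = 6
            · obtain ⟨e0, e1⟩ := h6' hs; omega
            · omega
          rw [if_pos h, if_pos (by rw [aux_eqD d, hD.1, hD.2])]
        · rw [if_neg h, if_neg ?_]
          intro hcon
          rw [hcon] at h
          simp [Finsupp.single_apply] at h
      rw [Finset.sum_congr rfl hpt, Finset.sum_ite_eq' F.support]
      split_ifs with hmem
      · simp [c, Finsupp.single_apply]
      · rw [notMem_support_iff] at hmem
        have : c 0 5 = 0 := by rw [hc]; exact hmem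
        simp [this]
    have hneg : P.coeff 10 < 0 := by
      rw [hNval]
      have hε5 : ε ^ 5 = ε := by rw [hε]; split_ifs <;> norm_num
      rw [hε5, hε]
      split_ifs with h
      · simpa using h
      · have : 0 < c 0 5 := lt_of_le_of_ne (not_lt.mp h) (Ne.symm h05)
        simpa using this
    obtain ⟨m, hm⟩ := aux_unbounded P 10 (by norm_num) hzero hneg M
    exact ⟨1 * m, ε * m ^ 2, by rwa [← aux_eval]⟩
  -- Case 2 : c 0 5 = 0, c 1 4 ≠ 0.  Use x = α m, y = m², degree 9.
  · set α : ℤ := if c 1 4 < 0 then 1 else -1 with hα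
    set P := aeval ![Polynomial.C α * Polynomial.X, Polynomial.C 1 * Polynomial.X ^ 2] F with hP
    have hzero : ∀ n, 9 < n → P.coeff n = 0 := by
      intro n hn
      rw [hP, aux_coeff]
      apply Finset.sum_eq_zero
      intro d hd
      obtain ⟨hle, h6'⟩ := aux_support F hdeg f₆ h6 hd
      split_ifs with h
      · by_cases hs : d 0 + d 1 = 6
        · obtain ⟨e0, e1⟩ := h6' hs; omega
        · have hD : d 0 = 0 ∧ d 1 = 5 := by omega
          have : F.coeff d = 0 := by
            rw [aux_eqD d, hD.1, hD.2]; exact h05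
          simp [this]
      · rfl
    have hNval : P.coeff 9 = c 1 4 * α := by
      rw [hP, aux_coeff]
      have hpt : ∀ d ∈ F.support,
          (if d 0 + 2 * d 1 = 9 then F.coeff d * α ^ (d 0) * (1:ℤ) ^ (d 1) else 0)
          = (if d = Finsupp.single 0 1 + Finsupp.single 1 4
              then F.coeff d * α ^ (d 0) * (1:ℤ) ^ (d 1) else 0) := by
        intro d hd
        obtain ⟨hle, h6'⟩ := aux_support F hdeg f₆ h6 hd
        by_cases h : d 0 + 2 * d 1 = 9
        · have hD : d 0 = 1 ∧ d 1 = 4 := by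
            by_cases hs : d 0 + d 1 = 6
            · obtain ⟨e0, e1⟩ := h6' hs; omega
            · omega
          rw [if_pos h, if_pos (by rw [aux_eqD d, hD.1, hD.2])]
        · rw [if_neg h, if_neg ?_]
          intro hcon
          rw [hcon] at h
          simp [Finsupp.single_apply] at h
      rw [Finset.sum_congr rfl hpt, Finset.sum_ite_eq' F.support]
      split_ifs with hmem
      · simp [c, Finsupp.single_apply]
      · rw [notMem_support_iff] at hmem
        have : c 1 4 = 0 := by rw [hc]; exact hmem
        simp [this]
    have hneg : P.coeff 9 < 0 := by
      rw [hNval, hα]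
      split_ifs with h
      · simpa using h
      · have : 0 < c 1 4 := lt_of_le_of_ne (not_lt.mp h) (Ne.symm h14)
        simpa using this
    obtain ⟨m, hm⟩ := aux_unbounded P 9 (by norm_num) hzero hneg M
    exact ⟨α * m, 1 * m ^ 2, by rwa [← aux_eval]⟩
  -- Case 3 : c 0 5 = c 1 4 = 0, c 2 3 ≠ 0.  Use x = α m, y = ε m², degree 8.
  · set ε : ℤ := if c 2 3 < 0 then 1 else -1 with hε
    set α : ℤ := 1 + |c 0 4| with hα
    set P := aeval ![Polynomial.C α * Polynomial.X, Polynomial.C ε * Polynomial.X ^ 2] F with hP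
    have hzero : ∀ n, 8 < n → P.coeff n = 0 := by
      intro n hn
      rw [hP, aux_coeff]
      apply Finset.sum_eq_zero
      intro d hd
      obtain ⟨hle, h6'⟩ := aux_support F hdeg f₆ h6 hd
      split_ifs with h
      · by_cases hs : d 0 + d 1 = 6
        · obtain ⟨e0, e1⟩ := h6' hs; omega
        · have hD : (d 0 = 0 ∧ d 1 = 5) ∨ (d 0 = 1 ∧ d 1 = 4) := by omega
          rcases hD with ⟨ha, hb⟩ | ⟨ha, hb⟩
          · have : F.coeff d = 0 := by rw [aux_eqD d, ha, hb]; exact h05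
            simp [this]
          · have : F.coeff d = 0 := by rw [aux_eqD d, ha, hb]; exact h14
            simp [this]
      · rfl
    have hNval : P.coeff 8 = c 2 3 * α ^ 2 * ε ^ 3 + c 0 4 * ε ^ 4 := by
      rw [hP, aux_coeff]
      have hpt : ∀ d ∈ F.support,
          (if d 0 + 2 * d 1 = 8 then F.coeff d * α ^ (d 0) * ε ^ (d 1) else 0)
          = (if d = Finsupp.single 0 2 + Finsupp.single 1 3
              then F.coeff d * α ^ (d 0) * ε ^ (d 1) else 0)
          + (if d = Finsupp.single 0 0 + Finsupp.single 1 4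
              then F.coeff d * α ^ (d 0) * ε ^ (d 1) else 0) := by
        intro d hd
        obtain ⟨hle, h6'⟩ := aux_support F hdeg f₆ h6 hd
        by_cases h : d 0 + 2 * d 1 = 8
        · have hD : (d 0 = 2 ∧ d 1 = 3) ∨ (d 0 = 0 ∧ d 1 = 4) := by
            by_cases hs : d 0 + d 1 = 6
            · obtain ⟨e0, e1⟩ := h6' hs; omega
            · omega
          rcases hD with ⟨ha, hb⟩ | ⟨ha, hb⟩
          · have hne : d ≠ Finsupp.single 0 0 + Finsupp.single 1 4 := by
              intro hcon
              have := DFunLike.congr_fun hcon (0 : Fin 2)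
              simp [Finsupp.single_apply, ha] at this
            rw [if_pos h, if_pos (by rw [aux_eqD d, ha, hb]), if_neg hne, add_zero]
          · have hne : d ≠ Finsupp.single 0 2 + Finsupp.single 1 3 := by
              intro hcon
              have := DFunLike.congr_fun hcon (0 : Fin 2)
              simp [Finsupp.single_apply, ha] at this
            rw [if_pos h, if_neg hne, if_pos (by rw [aux_eqD d, ha, hb]), zero_add]
        · have hne1 : d ≠ Finsupp.single 0 2 + Finsupp.single 1 3 := by
            intro hcon; rw [hcon] at h; simp [Finsupp.single_apply] at h
          have hne2 : d ≠ Finsupp.single 0 0 + Finsupp.single 1 4 := by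
            intro hcon; rw [hcon] at h; simp [Finsupp.single_apply] at h
          rw [if_neg h, if_neg hne1, if_neg hne2, add_zero]
      rw [Finset.sum_congr rfl hpt, Finset.sum_add_distrib,
        Finset.sum_ite_eq' F.support, Finset.sum_ite_eq' F.support]
      congr 1
      · split_ifs with hmem
        · simp [c, Finsupp.single_apply]
        · rw [notMem_support_iff] at hmem
          have : c 2 3 = 0 := by rw [hc]; exact hmem
          simp [this]
      · split_ifs with hmem
        · simp [c, Finsupp.single_apply]
        · rw [notMem_support_iff] at hmem
          have : c 0 4 = 0 := by rw [hc]; exact hmem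
          simp [this]
    have hneg : P.coeff 8 < 0 := by
      rw [hNval]
      have hε3 : ε ^ 3 = ε := by rw [hε]; split_ifs <;> norm_num
      have hε4 : ε ^ 4 = 1 := by rw [hε]; split_ifs <;> norm_num
      have hA : c 2 3 * ε ≤ -1 := by
        rw [hε]; split_ifs with h
        · omega
        · have : 0 < c 2 3 := lt_of_le_of_ne (not_lt.mp h) (Ne.symm h23)
          omega
      have hα1 : 1 + c 0 4 ≤ α := by
        rw [hα]; have := le_abs_self (c 0 4); omega
      have hαpos : 1 ≤ α := by
        rw [hα]; have := abs_nonneg (c 0 4); omega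
      rw [hε3, hε4, mul_one]
      nlinarith [sq_nonneg α]
    obtain ⟨m, hm⟩ := aux_unbounded P 8 (by norm_num) hzero hneg M
    exact ⟨α * m, ε * m ^ 2, by rwa [← aux_eval]⟩
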